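/- arXiv:1906.07774 — 5 statements merged into one kernel-verified Lean document; each statement's English description precedes it below -/
import Mathlib

section
/- Let (Ω, P) be a probability space, X a measurable space, x : Ω → X a random variable, and ℓ : ℝ^d × X → ℝ a loss, differentiable in its first argument with gradient ∇ℓ(θ, x) ∈ ℝ^d, such that f(θ) := E[ℓ(θ, x)] is differentiable with ∇f(θ) = E[∇ℓ(θ, x)] for all θ. Assume: (i) f is μ-strongly convex with μ > 0 and attains its minimum f* at some θ̂; (ii) there is a symmetric matrix H such that f(θ') ≤ f(θ) + ⟨∇f(θ), θ' − θ⟩ + (1/2)(θ' − θ)ᵀH(θ' − θ) for all θ, θ'; (iii) there is a symmetric positive semidefinite matrix S such that E[∇ℓ(θ, x)∇ℓ(θ, x)ᵀ] ⪯ S + ∇f(θ)∇f(θ)ᵀ in the Loewner order for all θ; (iv) M is a symmetric positive definite matrix, α > 0, and μ_M > 0 satisfies μ_M·I ⪯ M − (α/2)·M H M in the Loewner order. Then for every θ ∈ ℝ^d, E[f(θ − α M ∇ℓ(θ, x))] − f* ≤ (1 − 2αμ_Mμ)(f(θ) − f*) + (α²/2)·Tr(M H M S). -/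
open MeasureTheory ProbabilityTheory Matrix

/-- The continuous linear map `w ↦ ∑ i, v i * w i`, i.e. the pairing with the gradient
vector `v`, used to say that a function has gradient `v` at a point. -/
noncomputable def gradPairing {d : ℕ} (v : Fin d → ℝ) : (Fin d → ℝ) →L[ℝ] ℝ :=
  ∑ i, v i • (ContinuousLinearMap.proj i : (Fin d → ℝ) →L[ℝ] ℝ)

lemma aux_trace_mul_eq_sum {d : ℕ} (A B : Matrix (Fin d) (Fin d) ℝ) :
    (A * B).trace = ∑ i, ∑ j, A i j * B j i := by
  simp [Matrix.trace, Matrix.diag, Matrix.mul_apply]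

lemma aux_diag_nonneg {d : ℕ} {A : Matrix (Fin d) (Fin d) ℝ} (hA : A.PosSemidef)
    (i : Fin d) : 0 ≤ A i i := by
  have := hA.dotProduct_mulVec_nonneg (Pi.single i 1)
  simpa [dotProduct, Matrix.mulVec, Pi.single_apply] using this

lemma aux_trace_mul_nonneg {d : ℕ} {A B : Matrix (Fin d) (Fin d) ℝ}
    (hA : A.PosSemidef) (hB : B.PosSemidef) : 0 ≤ (A * B).trace := by
  obtain ⟨C, rfl⟩ : ∃ C : Matrix (Fin d) (Fin d) ℝ, A = Cᴴ * C := by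
    open scoped MatrixOrder Matrix.Norms.L2Operator in
    exact CStarAlgebra.nonneg_iff_eq_star_mul_self.mp hA.nonneg
  rw [Matrix.mul_assoc, Matrix.trace_mul_comm]
  have h := hB.mul_mul_conjTranspose_same C
  have : (C * B * Cᴴ).trace = ∑ i, (C * B * Cᴴ) i i := by simp [Matrix.trace, Matrix.diag]
  exact this ▸ Finset.sum_nonneg fun i _ => aux_diag_nonneg h i

lemma aux_dot_self_nonneg {d : ℕ} (w : Fin d → ℝ) : (0:ℝ) ≤ w ⬝ᵥ w :=
  Finset.sum_nonneg fun i _ => mul_self_nonneg _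

lemma aux_conj_eq_transpose {d : ℕ} (B : Matrix (Fin d) (Fin d) ℝ) : Bᴴ = Bᵀ := by
  ext i j; simp [Matrix.conjTranspose_apply]

/-- One-step descent inequality for preconditioned stochastic gradient
(Proposition 2 of the paper): under μ-strong convexity of `f = E[ℓ(·, x)]`, a quadratic
upper bound with curvature matrix `H`, the gradient second-moment bound
`E[∇ℓ∇ℓᵀ] ⪯ S + ∇f∇fᵀ`, and `μ_M·I ⪯ M − (α/2)·M H M`, one step of
`θ ↦ θ − α M ∇ℓ(θ, x)` satisfies
`E[f(θ − α M ∇ℓ(θ, x))] − f* ≤ (1 − 2αμ_Mμ)(f(θ) − f*) + (α²/2)·Tr(M H M S)`. -/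
theorem one_step_descent_preconditioned_sgd
    {Ω : Type*} [MeasurableSpace Ω] (P : Measure Ω) [IsProbabilityMeasure P]
    {X : Type*} [MeasurableSpace X] (x : Ω → X) (hx : Measurable x)
    (d : ℕ) (ℓ : (Fin d → ℝ) → X → ℝ) (g : (Fin d → ℝ) → X → Fin d → ℝ)
    (hg : ∀ θ x', HasFDerivAt (fun t => ℓ t x') (gradPairing (g θ x')) θ)
    (f : (Fin d → ℝ) → ℝ) (hf : ∀ θ, f θ = ∫ ω, ℓ θ (x ω) ∂P)
    (gradf : (Fin d → ℝ) → Fin d → ℝ)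
    (hg_int : ∀ θ i, Integrable (fun ω => g θ (x ω) i) P)
    (hgradf : ∀ θ i, gradf θ i = ∫ ω, g θ (x ω) i ∂P)
    (hf_deriv : ∀ θ, HasFDerivAt f (gradPairing (gradf θ)) θ)
    (μ : ℝ) (hμ : 0 < μ)
    (hstrong : ∀ θ θ' : Fin d → ℝ,
      f θ + gradf θ ⬝ᵥ (θ' - θ) + μ / 2 * ((θ' - θ) ⬝ᵥ (θ' - θ)) ≤ f θ')
    (θhat : Fin d → ℝ) (fstar : ℝ) (hθhat : f θhat = fstar) (hmin : ∀ θ, fstar ≤ f θ)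
    (H : Matrix (Fin d) (Fin d) ℝ) (hH : H.IsSymm)
    (hupper : ∀ θ θ' : Fin d → ℝ,
      f θ' ≤ f θ + gradf θ ⬝ᵥ (θ' - θ) + 1 / 2 * ((θ' - θ) ⬝ᵥ H.mulVec (θ' - θ)))
    (S : Matrix (Fin d) (Fin d) ℝ) (hS : S.PosSemidef)
    (hcov_int : ∀ θ i j, Integrable (fun ω => g θ (x ω) i * g θ (x ω) j) P)
    (hcov : ∀ θ : Fin d → ℝ,
      (S + vecMulVec (gradf θ) (gradf θ)
          - Matrix.of fun i j => ∫ ω, g θ (x ω) i * g θ (x ω) j ∂P).PosSemidef)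
    (M : Matrix (Fin d) (Fin d) ℝ) (hM : M.PosDef)
    (α : ℝ) (hα : 0 < α) (μM : ℝ) (hμM : 0 < μM)
    (hμM_le : (M - (α / 2) • (M * H * M) - μM • (1 : Matrix (Fin d) (Fin d) ℝ)).PosSemidef)
    (θ : Fin d → ℝ)
    (hstep_int : Integrable (fun ω => f (θ - α • M.mulVec (g θ (x ω)))) P) :
    (∫ ω, f (θ - α • M.mulVec (g θ (x ω))) ∂P) - fstar
      ≤ (1 - 2 * α * μM * μ) * (f θ - fstar) + α ^ 2 / 2 * (M * H * M * S).trace := by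
  have hMsymm : Mᵀ = M := by rw [← aux_conj_eq_transpose]; exact hM.isHermitian
  set v : Fin d → ℝ := gradf θ with hv
  set A : Matrix (Fin d) (Fin d) ℝ := M * H * M with hA
  set C : Matrix (Fin d) (Fin d) ℝ :=
    Matrix.of fun i j => ∫ ω, g θ (x ω) i * g θ (x ω) j ∂P with hC
  -- H is bounded below by μ on quadratic forms
  have hHlb : ∀ w : Fin d → ℝ, μ * (w ⬝ᵥ w) ≤ w ⬝ᵥ H.mulVec w := by
    intro w
    have h1 := hstrong θ (θ + w)
    have h2 := hupper θ (θ + w)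
    simp only [add_sub_cancel_left] at h1 h2
    linarith
  have hHpsd : H.PosSemidef := by
    refine Matrix.PosSemidef.of_dotProduct_mulVec_nonneg
      (show Hᴴ = H by rw [aux_conj_eq_transpose]; exact hH) fun w => ?_
    have h1 := hHlb w
    have h2 := aux_dot_self_nonneg w
    have h3 : star w = w := by simp
    rw [h3]
    nlinarith
  have hApsd : A.PosSemidef := by
    have h := hHpsd.mul_mul_conjTranspose_same M
    rwa [aux_conj_eq_transpose, hMsymm] at h
  -- key quadratic identity
  have hkey : ∀ w : Fin d → ℝ, M.mulVec w ⬝ᵥ H.mulVec (M.mulVec w) = w ⬝ᵥ A.mulVec w := by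
    intro w
    rw [hA, ← Matrix.mulVec_mulVec, ← Matrix.mulVec_mulVec, Matrix.dotProduct_mulVec w,
      ← Matrix.mulVec_transpose, hMsymm]
  -- pointwise descent bound
  have hpt : ∀ ω, f (θ - α • M.mulVec (g θ (x ω)))
      ≤ f θ - α * (v ⬝ᵥ M.mulVec (g θ (x ω)))
        + α ^ 2 / 2 * (g θ (x ω) ⬝ᵥ A.mulVec (g θ (x ω))) := by
    intro ω
    have h := hupper θ (θ - α • M.mulVec (g θ (x ω)))
    have e1 : (θ - α • M.mulVec (g θ (x ω))) - θ = -(α • M.mulVec (g θ (x ω))) :=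
      sub_sub_cancel_left θ _
    rw [e1] at h
    have e2 : v ⬝ᵥ (-(α • M.mulVec (g θ (x ω)))) = -(α * (v ⬝ᵥ M.mulVec (g θ (x ω)))) := by
      simp
    have e3 : (-(α • M.mulVec (g θ (x ω)))) ⬝ᵥ H.mulVec (-(α • M.mulVec (g θ (x ω))))
        = α ^ 2 * (g θ (x ω) ⬝ᵥ A.mulVec (g θ (x ω))) := by
      rw [← hkey]
      simp only [Matrix.mulVec_neg, Matrix.mulVec_smul, dotProduct_neg, neg_dotProduct,
        dotProduct_smul, smul_dotProduct, smul_eq_mul, neg_neg]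
      ring
    rw [← hv, e2, e3] at h
    linarith
  -- linear and quadratic expansions as double sums
  have hlin : ∀ u : Fin d → ℝ, v ⬝ᵥ M.mulVec u = ∑ i, ∑ j, (v i * M i j) * u j := by
    intro u
    simp only [dotProduct, Matrix.mulVec, Finset.mul_sum]
    exact Finset.sum_congr rfl fun i _ => Finset.sum_congr rfl fun j _ => by ring
  have hquad : ∀ u : Fin d → ℝ, u ⬝ᵥ A.mulVec u = ∑ i, ∑ j, A i j * (u i * u j) := by
    intro u
    simp only [dotProduct, Matrix.mulVec, Finset.mul_sum]
    exact Finset.sum_congr rfl fun i _ => Finset.sum_congr rfl fun j _ => by ring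
  -- integrability
  have hI1int : Integrable (fun ω => v ⬝ᵥ M.mulVec (g θ (x ω))) P := by
    simp only [hlin]
    exact integrable_finset_sum _ fun i _ =>
      integrable_finset_sum _ fun j _ => (hg_int θ j).const_mul _
  have hI2int : Integrable (fun ω => g θ (x ω) ⬝ᵥ A.mulVec (g θ (x ω))) P := by
    simp only [hquad]
    exact integrable_finset_sum _ fun i _ =>
      integrable_finset_sum _ fun j _ => (hcov_int θ i j).const_mul _
  -- integral values
  have hI1val : ∫ ω, v ⬝ᵥ M.mulVec (g θ (x ω)) ∂P = v ⬝ᵥ M.mulVec v := by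
    simp only [hlin]
    rw [integral_finset_sum _ (fun i _ =>
      integrable_finset_sum _ fun j _ => (hg_int θ j).const_mul _)]
    refine Finset.sum_congr rfl fun i _ => ?_
    rw [integral_finset_sum _ (fun j _ => (hg_int θ j).const_mul _)]
    refine Finset.sum_congr rfl fun j _ => ?_
    rw [integral_const_mul, hv, hgradf θ j]
  have hI2val : ∫ ω, g θ (x ω) ⬝ᵥ A.mulVec (g θ (x ω)) ∂P = ∑ i, ∑ j, A i j * C i j := by
    simp only [hquad]
    rw [integral_finset_sum _ (fun i _ =>
      integrable_finset_sum _ (f := fun j ω => A i j * (g θ (x ω) i * g θ (x ω) j))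
        fun j _ => (hcov_int θ i j).const_mul (A i j))]
    refine Finset.sum_congr rfl fun i _ => ?_
    rw [integral_finset_sum _ (f := fun j ω => A i j * (g θ (x ω) i * g θ (x ω) j))
      (fun j _ => (hcov_int θ i j).const_mul (A i j))]
    refine Finset.sum_congr rfl fun j _ => ?_
    rw [integral_const_mul]
    rfl
  -- covariance bound in double-sum form
  have hT := hcov θ
  rw [← hv, ← hC] at hT
  have hTsymm : ∀ i j, (S + vecMulVec v v - C) i j = (S + vecMulVec v v - C) j i := by
    intro i j
    have h := hT.isHermitian
    have := congrFun (congrFun h j) i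
    simpa [Matrix.conjTranspose_apply] using this
  have hSsymm : ∀ i j, S i j = S j i := by
    intro i j
    have := congrFun (congrFun hS.isHermitian j) i
    simpa [Matrix.conjTranspose_apply] using this
  have hΦT : 0 ≤ ∑ i, ∑ j, A i j * (S + vecMulVec v v - C) i j := by
    have h := aux_trace_mul_nonneg hApsd hT
    rw [aux_trace_mul_eq_sum] at h
    refine h.trans_eq ?_
    exact Finset.sum_congr rfl fun i _ => Finset.sum_congr rfl fun j _ => by
      rw [hTsymm i j]
  have hΦS : ∑ i, ∑ j, A i j * S i j = (A * S).trace := by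
    rw [aux_trace_mul_eq_sum]
    exact Finset.sum_congr rfl fun i _ => Finset.sum_congr rfl fun j _ => by
      rw [hSsymm i j]
  have hsplit : ∑ i, ∑ j, A i j * (S + vecMulVec v v - C) i j
      = (∑ i, ∑ j, A i j * S i j) + (v ⬝ᵥ A.mulVec v) - ∑ i, ∑ j, A i j * C i j := by
    rw [hquad v, ← Finset.sum_add_distrib, ← Finset.sum_sub_distrib]
    refine Finset.sum_congr rfl fun i _ => ?_
    rw [← Finset.sum_add_distrib, ← Finset.sum_sub_distrib]
    refine Finset.sum_congr rfl fun j _ => ?_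
    simp only [Matrix.sub_apply, Matrix.add_apply, Matrix.vecMulVec_apply]
    ring
  have h4 : ∑ i, ∑ j, A i j * C i j ≤ (A * S).trace + v ⬝ᵥ A.mulVec v := by
    rw [hsplit, hΦS] at hΦT
    linarith
  -- strong convexity / PL inequality
  have hPL : 2 * μ * (f θ - fstar) ≤ v ⬝ᵥ v := by
    have hs := hstrong θ θhat
    rw [hθhat, ← hv] at hs
    have hexp : 0 ≤ (μ • (θhat - θ) + v) ⬝ᵥ (μ • (θhat - θ) + v) :=
      aux_dot_self_nonneg _
    have he : (μ • (θhat - θ) + v) ⬝ᵥ (μ • (θhat - θ) + v)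
        = μ ^ 2 * ((θhat - θ) ⬝ᵥ (θhat - θ)) + 2 * μ * (v ⬝ᵥ (θhat - θ)) + v ⬝ᵥ v := by
      simp only [dotProduct_add, add_dotProduct, dotProduct_smul, smul_dotProduct,
        smul_eq_mul]
      rw [dotProduct_comm (θhat - θ) v]
      ring
    rw [he] at hexp
    nlinarith [hs, hexp, hμ]
  -- preconditioner bound
  have h1 : 0 ≤ (v ⬝ᵥ M.mulVec v) - α / 2 * (v ⬝ᵥ A.mulVec v) - μM * (v ⬝ᵥ v) := by
    have h := hμM_le.dotProduct_mulVec_nonneg v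
    have h3 : star v = v := by simp
    rw [h3, Matrix.sub_mulVec, Matrix.sub_mulVec, Matrix.smul_mulVec,
      Matrix.smul_mulVec, Matrix.one_mulVec, dotProduct_sub, dotProduct_sub,
      dotProduct_smul, dotProduct_smul, smul_eq_mul, smul_eq_mul] at h
    linarith
  -- integrate the pointwise bound
  have hRHSint : Integrable (fun ω => f θ - α * (v ⬝ᵥ M.mulVec (g θ (x ω)))
      + α ^ 2 / 2 * (g θ (x ω) ⬝ᵥ A.mulVec (g θ (x ω)))) P :=
    ((integrable_const _).sub (hI1int.const_mul α)).add (hI2int.const_mul _)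
  have hint1 : Integrable (fun ω => f θ - α * (v ⬝ᵥ M.mulVec (g θ (x ω)))) P :=
    (integrable_const _).sub (hI1int.const_mul α)
  have hint2 : Integrable (fun ω => α ^ 2 / 2 * (g θ (x ω) ⬝ᵥ A.mulVec (g θ (x ω)))) P :=
    hI2int.const_mul _
  have hbound := integral_mono hstep_int hRHSint hpt
  rw [integral_add hint1 hint2,
    integral_sub (integrable_const _) (hI1int.const_mul α), integral_const_mul,
    integral_const_mul, integral_const, hI1val, hI2val] at hbound
  simp only [measure_univ, ENNReal.toReal_one, probReal_univ, one_smul] at hbound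
  -- final arithmetic
  have hfm : 0 ≤ f θ - fstar := by linarith [hmin θ]
  have e1 : α ^ 2 / 2 * (∑ i, ∑ j, A i j * C i j)
      ≤ α ^ 2 / 2 * ((A * S).trace + v ⬝ᵥ A.mulVec v) :=
    mul_le_mul_of_nonneg_left h4 (by positivity)
  have e2 : 0 ≤ α * ((v ⬝ᵥ M.mulVec v) - α / 2 * (v ⬝ᵥ A.mulVec v) - μM * (v ⬝ᵥ v)) :=
    mul_nonneg hα.le h1
  have e3 : α * μM * (2 * μ * (f θ - fstar)) ≤ α * μM * (v ⬝ᵥ v) :=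
    mul_le_mul_of_nonneg_left hPL (by positivity)
  nlinarith [hbound, e1, e2, e3]
end

section
/- Let α be a nonzero real number and let M, H, S, Σ be d×d real matrices with M, H, Σ symmetric. If Σ = (I − α M H) Σ (I − α M H)ᵀ + α² M S Mᵀ, then Σ H M + M H Σ = α · M (S + H Σ H) M. -/
open Matrix

/-! Expanding the product, the fixed-point equation `Σ = (1 - αA) Σ (1 - αB) + α² Q` says
`α (AΣ + ΣB) = α² (AΣB + Q)`; dividing by `α ≠ 0` gives the modified Lyapunov equation.
For `A = MH` with `M, H` symmetric, `Aᵀ = HM` and `AΣAᵀ + MSM = M (S + HΣH) M`. -/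

theorem self_eq_one_sub_smul_mul_mul_one_sub_smul_add_smul_iff {𝕜 R : Type*} [Field 𝕜] [Ring R]
    [Algebra 𝕜 R] {α : 𝕜} (hα : α ≠ 0) (A B X Q : R) :
    X = (1 - α • A) * X * (1 - α • B) + α ^ 2 • Q ↔ A * X + X * B = α • (A * X * B + Q) := by
  have expand : (1 - α • A) * X * (1 - α • B) + α ^ 2 • Q
      = X - α • (A * X + X * B) + α • α • (A * X * B + Q) := by
    simp only [sub_mul, mul_sub, one_mul, mul_one, smul_mul_assoc, mul_smul_comm, smul_add,
      smul_sub, smul_smul, pow_two, mul_assoc]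
    abel
  rw [expand]
  constructor
  · intro h
    apply smul_right_injective R hα
    linear_combination (norm := module) h
  · intro h
    linear_combination (norm := module) α • h

theorem Matrix.transpose_one_sub_smul_mul_of_isSymm {n 𝕜 : Type*} [Fintype n] [DecidableEq n]
    [CommRing 𝕜] {M H : Matrix n n 𝕜} (hM : M.IsSymm) (hH : H.IsSymm) (α : 𝕜) :
    (1 - α • (M * H))ᵀ = 1 - α • (H * M) := by
  rw [transpose_sub, transpose_one, transpose_smul, transpose_mul, hM.eq, hH.eq]

theorem stationary_covariance_lyapunov_general
    (d : ℕ) (α : ℝ) (hα : α ≠ 0)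
    (M H S Sig : Matrix (Fin d) (Fin d) ℝ)
    (hM : M.IsSymm) (hH : H.IsSymm)
    (heq : Sig = (1 - α • (M * H)) * Sig * (1 - α • (M * H))ᵀ + α ^ 2 • (M * S * Mᵀ)) :
    Sig * H * M + M * H * Sig = α • (M * (S + H * Sig * H) * M) := by
  rw [transpose_one_sub_smul_mul_of_isSymm hM hH, hM.eq,
    self_eq_one_sub_smul_mul_mul_one_sub_smul_add_smul_iff hα] at heq
  calc Sig * H * M + M * H * Sig = M * H * Sig + Sig * (H * M) := by noncomm_ring
    _ = α • (M * H * Sig * (H * M) + M * S * M) := heq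
    _ = α • (M * (S + H * Sig * H) * M) := by noncomm_ring

/-- (Stationary covariance, Proposition 3.) If `α ≠ 0`, `M, H, Σ` are
symmetric, and `Σ` is a fixed point of the iterate-covariance recursion
`Σ = (I − α M H) Σ (I − α M H)ᵀ + α² M S Mᵀ`, then
`Σ H M + M H Σ = α · M (S + H Σ H) M`. -/
theorem stationary_covariance_lyapunov
    (d : ℕ) (α : ℝ) (hα : α ≠ 0)
    (M H S Sig : Matrix (Fin d) (Fin d) ℝ)
    (hM : M.IsSymm) (hH : H.IsSymm) (hSig : Sig.IsSymm)
    (heq : Sig = (1 - α • (M * H)) * Sig * (1 - α • (M * H))ᵀ + α ^ 2 • (M * S * Mᵀ)) :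
    Sig * H * M + M * H * Sig = α • (M * (S + H * Sig * H) * M) :=
  stationary_covariance_lyapunov_general d α hα M H S Sig hM hH heq
end

section
/- Let α > 0 and let H, M, S be diagonal d×d real matrices with diagonal entries h_i > 0, m_i > 0, s_i ≥ 0, and assume 0 < α m_i h_i < 2 for all i. Define the diagonal matrix Σ* with entries Σ*_{ii} = α m_i s_i / (2 h_i − α m_i h_i²). Then: (a) Σ* = (I − α M H) Σ* (I − α M H)ᵀ + α² M S Mᵀ, i.e. Σ* is a fixed point of the iterate-covariance recursion; and (b) (1/2)·Tr(H Σ*) = (α/2)·Tr((2 I − α M H)^{−1} M S). -/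
open Matrix

/-- (Stationary value behind Proposition 4, limit cycle of SG.) For
diagonal `H, M, S` with `h_i > 0`, `m_i > 0`, `s_i ≥ 0` and `0 < α m_i h_i < 2`, the
diagonal matrix `Σ*` with entries `α m_i s_i / (2 h_i − α m_i h_i²)` is a fixed point of
the iterate-covariance recursion, and `(1/2)·Tr(H Σ*) = (α/2)·Tr((2I − αMH)⁻¹ M S)`. -/
theorem sg_limit_cycle_stationary_value
    (d : ℕ) (α : ℝ) (hα : 0 < α) (h m s : Fin d → ℝ)
    (hh : ∀ i, 0 < h i) (hm : ∀ i, 0 < m i) (hs : ∀ i, 0 ≤ s i)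
    (hstep : ∀ i, α * m i * h i < 2) :
    (Matrix.diagonal fun i => α * m i * s i / (2 * h i - α * m i * h i ^ 2))
        = (1 - α • (Matrix.diagonal m * Matrix.diagonal h))
            * (Matrix.diagonal fun i => α * m i * s i / (2 * h i - α * m i * h i ^ 2))
            * (1 - α • (Matrix.diagonal m * Matrix.diagonal h))ᵀ
          + α ^ 2 • (Matrix.diagonal m * Matrix.diagonal s * (Matrix.diagonal m)ᵀ) ∧
    1 / 2 * (Matrix.diagonal h
          * Matrix.diagonal fun i => α * m i * s i / (2 * h i - α * m i * h i ^ 2)).trace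
      = α / 2 * (((2 : ℝ) • (1 : Matrix (Fin d) (Fin d) ℝ)
            - α • (Matrix.diagonal m * Matrix.diagonal h))⁻¹
          * (Matrix.diagonal m * Matrix.diagonal s)).trace := by
  have hden : ∀ i, 2 * h i - α * m i * h i ^ 2 ≠ 0 := by
    intro i
    have : 0 < h i * (2 - α * m i * h i) :=
      mul_pos (hh i) (by linarith [hstep i])
    intro hc; apply ne_of_gt this; linarith [hc]
  have hfac : ∀ i, (2 : ℝ) - α * (m i * h i) ≠ 0 := by
    intro i; have := hstep i; intro hc; nlinarith
  have hdiag1 : (1 : Matrix (Fin d) (Fin d) ℝ) - α • (Matrix.diagonal m * Matrix.diagonal h)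
      = Matrix.diagonal (fun i => 1 - α * (m i * h i)) := by
    rw [Matrix.diagonal_mul_diagonal]
    ext i j
    rcases eq_or_ne i j with rfl | hij
    · simp [Matrix.one_apply]
    · simp [Matrix.one_apply, hij]
  constructor
  · rw [hdiag1, Matrix.diagonal_transpose, Matrix.diagonal_mul_diagonal,
      Matrix.diagonal_mul_diagonal, Matrix.diagonal_transpose, Matrix.diagonal_mul_diagonal,
      Matrix.diagonal_mul_diagonal, ← Matrix.diagonal_smul]
    ext i j
    rcases eq_or_ne i j with rfl | hij
    · simp only [Matrix.add_apply, Matrix.diagonal_apply_eq, Pi.smul_apply, smul_eq_mul]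
      have hD := hden i
      generalize hDe : 2 * h i - α * m i * h i ^ 2 = D at hD ⊢
      field_simp [hD]
      rw [← hDe]
      ring
    · simp [hij]
  · have hinv : ((2 : ℝ) • (1 : Matrix (Fin d) (Fin d) ℝ)
        - α • (Matrix.diagonal m * Matrix.diagonal h))
        = Matrix.diagonal (fun i => 2 - α * (m i * h i)) := by
      rw [Matrix.diagonal_mul_diagonal]
      ext i j
      rcases eq_or_ne i j with rfl | hij
      · simp [Matrix.one_apply]
      · simp [Matrix.one_apply, hij]
    have hinv2 : (Matrix.diagonal (fun i => 2 - α * (m i * h i)))⁻¹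
        = Matrix.diagonal (fun i => ((2 : ℝ) - α * (m i * h i))⁻¹) := by
      apply Matrix.inv_eq_right_inv
      rw [Matrix.diagonal_mul_diagonal]
      convert Matrix.diagonal_one using 2
      funext i
      exact mul_inv_cancel₀ (hfac i)
    rw [hinv, hinv2, Matrix.diagonal_mul_diagonal, Matrix.diagonal_mul_diagonal,
      Matrix.diagonal_mul_diagonal, Matrix.trace_diagonal, Matrix.trace_diagonal,
      Finset.mul_sum, Finset.mul_sum]
    refine Finset.sum_congr rfl fun i _ => ?_
    have hD : 2 * h i - α * m i * h i ^ 2 = h i * (2 - α * (m i * h i)) := by ring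
    rw [hD]
    field_simp [(hh i).ne', hfac i]
end

section
/- Let α, γ, h, c be real numbers with α ≠ 0, h ≠ 0 and (1 − γ)(1 + γ − αh/2) ≠ 0. Let P = [[1, −α], [h, γ − α h]] and suppose the symmetric 2×2 matrix S = [[s_θ, s_{vθ}], [s_{vθ}, s_v]] satisfies S = P S Pᵀ + [[0, 0], [0, c]]. Then s_{vθ} = (α/2)·s_v, s_θ = (α(1 + γ)/(2h))·s_v, s_v = c / ((1 − γ)(1 + γ − αh/2)), and consequently s_θ = α(1 + γ)c / (h(1 − γ)(2 + 2γ − αh)). -/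
open Matrix

/-- (Fixed-point computation behind Proposition 5, limit cycle of Polyak
momentum.) If `α ≠ 0`, `h ≠ 0`, `(1 − γ)(1 + γ − αh/2) ≠ 0`, and the symmetric matrix
`S = [[s_θ, s_{vθ}], [s_{vθ}, s_v]]` satisfies `S = P S Pᵀ + [[0,0],[0,c]]` with
`P = [[1, −α], [h, γ − αh]]`, then `s_{vθ} = (α/2)s_v`, `s_θ = (α(1+γ)/(2h))s_v`,
`s_v = c/((1 − γ)(1 + γ − αh/2))`, and `s_θ = α(1+γ)c/(h(1 − γ)(2 + 2γ − αh))`. -/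
theorem polyak_momentum_stationary_moments
    (α γ h c sθ svθ sv : ℝ)
    (hα : α ≠ 0) (hh : h ≠ 0)
    (hden : (1 - γ) * (1 + γ - α * h / 2) ≠ 0)
    (heq : !![sθ, svθ; svθ, sv]
      = !![1, -α; h, γ - α * h] * !![sθ, svθ; svθ, sv] * (!![1, -α; h, γ - α * h])ᵀ
        + !![0, 0; 0, c]) :
    svθ = α / 2 * sv ∧
    sθ = α * (1 + γ) / (2 * h) * sv ∧
    sv = c / ((1 - γ) * (1 + γ - α * h / 2)) ∧
    sθ = α * (1 + γ) * c / (h * (1 - γ) * (2 + 2 * γ - α * h)) := by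
  have e00 := congrFun (congrFun heq 0) 0
  have e01 := congrFun (congrFun heq 0) 1
  have e11 := congrFun (congrFun heq 1) 1
  simp [Matrix.mul_apply, Matrix.transpose_apply, Fin.sum_univ_two, Matrix.vecHead,
    Matrix.vecTail, Matrix.vecMul, dotProduct] at e00 e01 e11
  have hne1 : (1 : ℝ) - γ ≠ 0 := fun h' => hden (by rw [h']; ring)
  have hne2 : 1 + γ - α * h / 2 ≠ 0 := fun h' => hden (by rw [h']; ring)
  have h1 : svθ = α / 2 * sv := by
    have : α * (α * sv - 2 * svθ) = 0 := by linear_combination -e00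
    rcases mul_eq_zero.1 this with h' | h'
    · exact absurd h' hα
    · linarith
  have hsθ : 2 * h * sθ = α * (1 + γ) * sv := by
    have : h * (2 * h * sθ - α * (1 + γ) * sv) = 0 := by
      linear_combination (-2 * h) * e01 + (2 * h * (1 + 2 * α * h - γ)) * h1
    rcases mul_eq_zero.1 this with h' | h'
    · exact absurd h' hh
    · linarith
  have h2 : sθ = α * (1 + γ) / (2 * h) * sv := by
    field_simp
    linarith [hsθ]
  have h3 : sv = c / ((1 - γ) * (1 + γ - α * h / 2)) := by
    rw [eq_div_iff hden]
    linear_combination e11 + 2 * (γ - α * h) * h * h1 + (h / 2) * hsθ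
  refine ⟨h1, h2, h3, ?_⟩
  have hne3 : 2 + 2 * γ - α * h ≠ 0 := fun h' => hne2 (by linarith)
  rw [h2, h3, div_mul_div_comm, div_eq_div_iff
    (mul_ne_zero (mul_ne_zero two_ne_zero hh) hden)
    (mul_ne_zero (mul_ne_zero hh hne1) hne3)]
  ring
end

section
/- Let α > 0, γ ∈ ℝ with γ ≠ 1, and let H, S be diagonal d×d real matrices with diagonal entries h_i ≠ 0 and s_i ≥ 0 such that (1 − γ)(1 + γ − α h_i/2) ≠ 0 for all i. For each i, let S_i = [[s_{θ,i}, s_{vθ,i}], [s_{vθ,i}, s_{v,i}]] be a symmetric fixed point of S_i = P_i S_i P_iᵀ + [[0,0],[0,s_i]], where P_i = [[1, −α], [h_i, γ − α h_i]]. Then the stationary expected suboptimality satisfies (1/2)·Σ_{i=1}^d h_i · s_{θ,i} = (α/2)·((1 + γ)/(1 − γ))·Tr((2(1 + γ) I − α H)^{−1} S). -/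
/-!
Since `H` and `S` are diagonal, the stationary covariance splits into `2 × 2` blocks, one per
coordinate, and each block is determined by three linear equations. The `(0,0)` entry forces
`2 s_{vθ} = α s_v`, the `(0,1)` entry then gives `2 h s_θ = α (1 + γ) s_v`, and the `(1,1)` entry
gives `s_v (1 - γ)(1 + γ - α h / 2) = s`. Eliminating `s_v` expresses `h s_θ` through `s`, and the
sum over coordinates is the trace of a product of diagonal matrices.
-/

open Matrix

namespace Matrix

variable {n K : Type*} [DecidableEq n]

theorem smul_one_sub_smul_diagonal [CommRing K] (c a : K) (v : n → K) :
    c • (1 : Matrix n n K) - a • diagonal v = diagonal fun i => c - a * v i := by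
  rw [smul_one_eq_diagonal, ← diagonal_smul, ← diagonal_sub]
  rfl

theorem trace_inv_diagonal_mul_diagonal [Fintype n] [Field K] {a : n → K} (ha : ∀ i, a i ≠ 0)
    (b : n → K) : ((diagonal a)⁻¹ * diagonal b).trace = ∑ i, b i / a i := by
  have hinv : (diagonal a)⁻¹ = diagonal fun i => (a i)⁻¹ := by
    refine inv_eq_right_inv ?_
    rw [diagonal_mul_diagonal, ← diagonal_one]
    exact congrArg diagonal (funext fun i => mul_inv_cancel₀ (ha i))
  simp only [hinv, diagonal_mul_diagonal, trace_diagonal, div_eq_inv_mul]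

end Matrix

section MomentumCoordinate

variable {K : Type*} [Field K] {α γ h s sθ svθ sv : K}

theorem momentum_fixedPoint_entries
    (hfix : !![sθ, svθ; svθ, sv]
      = !![1, -α; h, γ - α * h] * !![sθ, svθ; svθ, sv] * (!![1, -α; h, γ - α * h])ᵀ
        + !![0, 0; 0, s]) :
    sθ = sθ - 2 * α * svθ + α ^ 2 * sv ∧
    svθ = h * sθ + (γ - 2 * α * h) * svθ - α * (γ - α * h) * sv ∧
    sv = h ^ 2 * sθ + 2 * h * (γ - α * h) * svθ + (γ - α * h) ^ 2 * sv + s := by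
  simp only [← Matrix.ext_iff, Fin.forall_fin_two, Matrix.add_apply, mul_apply, transpose_apply,
    Fin.sum_univ_two, of_apply, cons_val_zero, cons_val_one, cons_val_fin_one] at hfix
  refine ⟨?_, ?_, ?_⟩
  · linear_combination hfix.1.1
  · linear_combination hfix.1.2
  · linear_combination hfix.2.2

theorem momentum_fixedPoint_mul_sθ [CharZero K] (hα : α ≠ 0)
    (hden : (1 - γ) * (1 + γ - α * h / 2) ≠ 0)
    (hfix : !![sθ, svθ; svθ, sv]
      = !![1, -α; h, γ - α * h] * !![sθ, svθ; svθ, sv] * (!![1, -α; h, γ - α * h])ᵀ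
        + !![0, 0; 0, s]) :
    h * sθ = α * (1 + γ) * s / ((1 - γ) * (2 * (1 + γ) - α * h)) := by
  obtain ⟨e00, e01, e11⟩ := momentum_fixedPoint_entries hfix
  have hvθ : 2 * svθ = α * sv := mul_left_cancel₀ hα (by linear_combination e00)
  have hθ : 2 * (h * sθ) = α * (1 + γ) * sv := by
    linear_combination (-2) * e01 + (1 - γ + 2 * α * h) * hvθ
  have hv : sv * ((1 - γ) * (1 + γ - α * h / 2)) = s := by
    linear_combination e11 + h * (γ - α * h) * hvθ + (h / 2) * hθ
  have hden' : (1 - γ) * (2 * (1 + γ) - α * h) ≠ 0 := by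
    convert mul_ne_zero hden (two_ne_zero (α := K)) using 1
    ring
  rw [eq_div_iff hden', ← hv]
  linear_combination (1 - γ) * (1 + γ - α * h / 2) * hθ

end MomentumCoordinate

theorem polyak_momentum_limit_cycle_general
    (d : ℕ) (α γ : ℝ) (hα : 0 < α)
    (h s : Fin d → ℝ)
    (hden : ∀ i, (1 - γ) * (1 + γ - α * h i / 2) ≠ 0)
    (sθ svθ sv : Fin d → ℝ)
    (hfix : ∀ i, !![sθ i, svθ i; svθ i, sv i]
      = !![1, -α; h i, γ - α * h i] * !![sθ i, svθ i; svθ i, sv i]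
          * (!![1, -α; h i, γ - α * h i])ᵀ
        + !![0, 0; 0, s i]) :
    1 / 2 * ∑ i, h i * sθ i
      = α / 2 * ((1 + γ) / (1 - γ))
          * (((2 * (1 + γ)) • (1 : Matrix (Fin d) (Fin d) ℝ) - α • Matrix.diagonal h)⁻¹
              * Matrix.diagonal s).trace := by
  have h1γ i : 1 - γ ≠ 0 := left_ne_zero_of_mul (hden i)
  have hdiag i : 2 * (1 + γ) - α * h i ≠ 0 := by
    convert mul_ne_zero (right_ne_zero_of_mul (hden i)) two_ne_zero using 1
    ring
  rw [smul_one_sub_smul_diagonal, trace_inv_diagonal_mul_diagonal hdiag, Finset.mul_sum,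
    Finset.mul_sum]
  refine Finset.sum_congr rfl fun i _ => ?_
  rw [momentum_fixedPoint_mul_sθ hα.ne' (hden i) (hfix i)]
  field_simp [h1γ i, hdiag i]

/-- (Proposition 5 of the paper, limit cycle of momentum.) With `H` and
`S` simultaneously diagonal (entries `h_i ≠ 0`, `s_i ≥ 0`), `α > 0`, `γ ≠ 1` and
`(1 − γ)(1 + γ − αh_i/2) ≠ 0`, if for each coordinate `i` the symmetric matrix
`S_i = [[s_{θ,i}, s_{vθ,i}], [s_{vθ,i}, s_{v,i}]]` is a fixed point of
`S_i = P_i S_i P_iᵀ + [[0,0],[0,s_i]]` with `P_i = [[1, −α], [h_i, γ − αh_i]]`, then the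
stationary expected suboptimality satisfies
`(1/2)·∑ i, h_i s_{θ,i} = (α/2)·((1+γ)/(1−γ))·Tr((2(1+γ)I − αH)⁻¹ S)`. -/
theorem polyak_momentum_limit_cycle
    (d : ℕ) (α γ : ℝ) (hα : 0 < α) (hγ : γ ≠ 1)
    (h s : Fin d → ℝ) (hh : ∀ i, h i ≠ 0) (hs : ∀ i, 0 ≤ s i)
    (hden : ∀ i, (1 - γ) * (1 + γ - α * h i / 2) ≠ 0)
    (sθ svθ sv : Fin d → ℝ)
    (hfix : ∀ i, !![sθ i, svθ i; svθ i, sv i]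
      = !![1, -α; h i, γ - α * h i] * !![sθ i, svθ i; svθ i, sv i]
          * (!![1, -α; h i, γ - α * h i])ᵀ
        + !![0, 0; 0, s i]) :
    1 / 2 * ∑ i, h i * sθ i
      = α / 2 * ((1 + γ) / (1 - γ))
          * (((2 * (1 + γ)) • (1 : Matrix (Fin d) (Fin d) ℝ) - α • Matrix.diagonal h)⁻¹
              * Matrix.diagonal s).trace :=
  polyak_momentum_limit_cycle_general d α γ hα h s hden sθ svθ sv hfix
end
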